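/- arXiv:2001.07784 — 5 statements merged into one kernel-verified Lean document; each statement's English description precedes it below -/
import Mathlib

section
/- For the flow-time LP with matching constraints, the dual solution given by α_i = (d_{u_i}(r_i) + d_{v_i}(r_i))/(2s) and β_{u,t} = d_u(t)/(2s) is feasible: for every job i and every time t ≥ r_i, α_i − β_{u_i,t} − β_{v_i,t} ≤ t − r_i, provided the scheduling algorithm with speed s removes at most s jobs incident to any fixed vertex per time step. -/
theorem sub_mul_le_of_sub_le_succ {f : ℕ → ℝ} {s : ℝ} (hf : ∀ n, f n - s ≤ f (n + 1))
    {m n : ℕ} (hmn : m ≤ n) : f m - s * ((n : ℝ) - m) ≤ f n := by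
  induction n, hmn using Nat.le_induction with
  | base => simp
  | succ n _ ih =>
    push_cast
    linarith [hf n]

/-- Feasibility of the dual solution `α_i = (d_{u_i}(r_i) + d_{v_i}(r_i))/(2s)`,
`β_{w,t} = d_w(t)/(2s)` for the flow-time LP: for every job `i` and time `t ≥ r_i`,
`α_i − β_{u_i,t} − β_{v_i,t} ≤ t − r_i`, given that (restricted to the relevant jobs)
the backlog at a vertex drops by at most `s` per time step, i.e. `d_w(t+1) ≥ d_w(t) − s`. -/
theorem dual_feasible_simple
    {V J : Type*} (u v : J → V) (r : J → ℕ) (d : V → ℕ → ℝ) (s : ℝ)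
    (hs : 0 < s)
    (hdrop : ∀ (w : V) (t : ℕ), d w t - s ≤ d w (t + 1))
    (i : J) (t : ℕ) (ht : r i ≤ t) :
    (d (u i) (r i) + d (v i) (r i)) / (2 * s)
      - d (u i) t / (2 * s) - d (v i) t / (2 * s) ≤ (t : ℝ) - (r i : ℝ) := by
  have hu := sub_mul_le_of_sub_le_succ (hdrop (u i)) ht
  have hv := sub_mul_le_of_sub_le_succ (hdrop (v i)) ht
  rw [div_sub_div_same, div_sub_div_same, div_le_iff₀ (by positivity)]
  linarith
end

section
/- If a feasible dual solution (α, β) satisfies Σ_i α_i ≥ (1/2)·A and Σ_{w,t} β_{w,t} ≤ A/(2+ε) where A is the algorithm's cost with speed 2+ε, then by weak LP duality A ≤ (2(2+ε)/ε)·OPT, where OPT is the optimal LP value. -/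
lemma half_sub_div_two_add (A ε : ℝ) (hε : 2 + ε ≠ 0) :
    A / 2 - A / (2 + ε) = ε / (2 * (2 + ε)) * A := by
  field_simp
  ring

/-- If a feasible dual solution has `Σ α ≥ A/2` and `Σ β ≤ A/(2+ε)`,
where `A = ALG(2+ε)` is the algorithm's cost with speed `2+ε`, then since by weak LP
duality the dual objective `Σ α − Σ β` is at most `OPT`, we get
`A ≤ (2(2+ε)/ε)·OPT`. -/
theorem speedup_competitive
    (ε A OPT sumα sumβ : ℝ) (hε : 0 < ε)
    (hα : A / 2 ≤ sumα)
    (hβ : sumβ ≤ A / (2 + ε))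
    (hweak : sumα - sumβ ≤ OPT) :
    A ≤ (2 * (2 + ε) / ε) * OPT := by
  have hspeed : 0 < 2 + ε := by linarith
  have hdual : ε / (2 * (2 + ε)) * A ≤ OPT := by
    rw [← half_sub_div_two_add A ε hspeed.ne']
    linarith
  rw [← inv_div, ← div_eq_inv_mul, le_div_iff₀ (by positivity), mul_comm]
  exact hdual
end

section
/- In the weighted unit-size setting, the dual variables α_i (defined from the weights of higher-weight jobs present at release and lower-weight jobs pushed back) and β_{u,t} = ω_u(t)/(2s) form a feasible dual solution: for every job i and time t ≥ r_i, α_i − β_{u_i,t}/d_{u_i} − β_{v_i,t}/d_{v_i} ≤ w_i (t − r_i). -/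
/-!
At an endpoint `a` of `i`, the term of `α_i` is at most `∑ min(w_i, w_j)` over the jobs `j` alive
at `a` when `i` is released. Such a `j` is either still alive at `t`, and then `w_j` is part of
`ω_a(t)`, or it was completed in `(r_i, t]`; at most `s·d_a` jobs at `a` complete per step, so the
latter contribute at most `w_i · s·d_a · (t − r_i)`. After division by `2 s d_a`, each endpoint
accounts for half of `w_i (t − r_i)`.
-/

open Finset

attribute [local instance] Classical.propDecidable

variable {V J : Type*}

/-- Job `j` is alive (released but uncompleted) at time `t`: `r j ≤ t < C j`. -/
def Alive (r C : J → ℕ) (j : J) (t : ℕ) : Prop := r j ≤ t ∧ t < C j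

/-- `ω a t`: total weight of alive jobs incident to vertex `a` at time `t`. -/
noncomputable def omega [Fintype J] [DecidableEq V] (u v : J → V) (wt : J → ℝ)
    (r C : J → ℕ) (a : V) (t : ℕ) : ℝ :=
  ∑ j ∈ univ.filter (fun j => (u j = a ∨ v j = a) ∧ Alive r C j t), wt j

/-- The alive jobs at time `t` sharing vertex `a`. -/
noncomputable def aliveAt [Fintype J] [DecidableEq V] (u v : J → V) (r C : J → ℕ)
    (a : V) (t : ℕ) : Finset J :=
  univ.filter (fun j => (u j = a ∨ v j = a) ∧ Alive r C j t)

/-- The dual variable `α_i` of the weighted dual-fitting analysis. -/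
noncomputable def alphaDual [Fintype J] [DecidableEq V] (u v : J → V) (d : V → ℕ)
    (wt : J → ℝ) (r C : J → ℕ) (s : ℝ) (i : J) : ℝ :=
  (1 / (2 * s)) *
    ((1 / (d (u i) : ℝ)) *
        (wt i * ((aliveAt u v r C (u i) (r i)).filter (fun j => wt i < wt j)).card
          + ∑ j ∈ (aliveAt u v r C (u i) (r i)).filter (fun j => wt j < wt i), wt j)
      + (1 / (d (v i) : ℝ)) *
        (wt i * ((aliveAt u v r C (v i) (r i)).filter (fun j => wt i < wt j)).card
          + ∑ j ∈ (aliveAt u v r C (v i) (r i)).filter (fun j => wt j < wt i), wt j))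

noncomputable def interferenceWeight [Fintype J] [DecidableEq V] (u v : J → V) (wt : J → ℝ)
    (r C : J → ℕ) (a : V) (i : J) : ℝ :=
  wt i * ((aliveAt u v r C a (r i)).filter (fun j => wt i < wt j)).card
    + ∑ j ∈ (aliveAt u v r C a (r i)).filter (fun j => wt j < wt i), wt j

lemma alphaDual_eq [Fintype J] [DecidableEq V] (u v : J → V) (d : V → ℕ) (wt : J → ℝ)
    (r C : J → ℕ) (s : ℝ) (i : J) :
    alphaDual u v d wt r C s i = 1 / (2 * s) *
      (1 / (d (u i) : ℝ) * interferenceWeight u v wt r C (u i) i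
        + 1 / (d (v i) : ℝ) * interferenceWeight u v wt r C (v i) i) :=
  rfl

section

variable {ι : Type*}

lemma Finset.mul_card_filter_lt_add_sum_filter_lt_le_sum_min (S : Finset ι) (f : ι → ℝ)
    {x : ℝ} (hx : 0 ≤ x) :
    x * (S.filter (fun j => x < f j)).card + ∑ j ∈ S.filter (fun j => f j < x), f j
      ≤ ∑ j ∈ S, min x (f j) := by
  rw [mul_comm x, ← nsmul_eq_mul, ← sum_const, sum_filter, sum_filter, ← sum_add_distrib]
  refine sum_le_sum fun j _ => ?_
  rcases lt_trichotomy x (f j) with h | h | h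
  · simp [h, h.not_gt, h.le]
  · simp [← h, hx]
  · simp [h, h.not_gt, h.le]

lemma Finset.sum_min_le_sum_filter_add_mul_card_filter_not (S : Finset ι) (f : ι → ℝ)
    (x : ℝ) (p : ι → Prop) :
    ∑ j ∈ S, min x (f j)
      ≤ ∑ j ∈ S.filter p, f j + x * (S.filter (fun j => ¬ p j)).card := by
  rw [← sum_filter_add_sum_filter_not S p, mul_comm x, ← nsmul_eq_mul, ← sum_const]
  exact add_le_add (sum_le_sum fun _ _ => min_le_right _ _)
    (sum_le_sum fun _ _ => min_le_left _ _)

end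

section

variable [Fintype J] [DecidableEq V] (u v : J → V) (r C : J → ℕ) (a : V)

lemma sum_filter_alive_le_omega (wt : J → ℝ) (hwt : ∀ j, 0 ≤ wt j) (t₀ t : ℕ) :
    ∑ j ∈ (aliveAt u v r C a t₀).filter (fun j => Alive r C j t), wt j
      ≤ omega u v wt r C a t := by
  refine sum_le_sum_of_subset_of_nonneg ?_ fun j _ _ => hwt j
  intro j hj
  simp only [aliveAt, mem_filter, mem_univ, true_and] at hj ⊢
  exact ⟨hj.1.1, hj.2⟩

lemma card_filter_not_alive_le {c : ℝ}
    (hcap : ∀ τ : ℕ, ((univ.filter (fun j => C j = τ ∧ (u j = a ∨ v j = a))).card : ℝ) ≤ c)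
    {t₀ t : ℕ} (ht : t₀ ≤ t) :
    (((aliveAt u v r C a t₀).filter (fun j => ¬ Alive r C j t)).card : ℝ)
      ≤ c * ((t : ℝ) - t₀) := by
  have hsub : (aliveAt u v r C a t₀).filter (fun j => ¬ Alive r C j t)
      ⊆ (Ioc t₀ t).biUnion (fun τ => univ.filter (fun j => C j = τ ∧ (u j = a ∨ v j = a))) := by
    intro j hj
    rw [mem_filter, aliveAt, mem_filter] at hj
    obtain ⟨⟨-, hinc, hr, hC⟩, hdone⟩ := hj
    exact mem_biUnion.mpr ⟨C j, mem_Ioc.mpr ⟨hC, not_lt.mp fun h => hdone ⟨hr.trans ht, h⟩⟩,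
      mem_filter.mpr ⟨mem_univ j, rfl, hinc⟩⟩
  calc (((aliveAt u v r C a t₀).filter (fun j => ¬ Alive r C j t)).card : ℝ)
      ≤ ∑ τ ∈ Ioc t₀ t, ((univ.filter (fun j => C j = τ ∧ (u j = a ∨ v j = a))).card : ℝ) := by
        exact_mod_cast (card_le_card hsub).trans card_biUnion_le
    _ ≤ ∑ _τ ∈ Ioc t₀ t, c := sum_le_sum fun τ _ => hcap τ
    _ = c * ((t : ℝ) - t₀) := by
        rw [sum_const, Nat.card_Ioc, nsmul_eq_mul, Nat.cast_sub ht, mul_comm]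

lemma interferenceWeight_le (wt : J → ℝ) (hwt : ∀ j, 0 ≤ wt j) {c : ℝ}
    (hcap : ∀ τ : ℕ, ((univ.filter (fun j => C j = τ ∧ (u j = a ∨ v j = a))).card : ℝ) ≤ c)
    {i : J} {t : ℕ} (ht : r i ≤ t) :
    interferenceWeight u v wt r C a i
      ≤ omega u v wt r C a t + c * (wt i * ((t : ℝ) - r i)) := by
  set S := aliveAt u v r C a (r i)
  calc interferenceWeight u v wt r C a i ≤ ∑ j ∈ S, min (wt i) (wt j) :=
        S.mul_card_filter_lt_add_sum_filter_lt_le_sum_min wt (hwt i)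
    _ ≤ ∑ j ∈ S.filter (fun j => Alive r C j t), wt j
          + wt i * (S.filter (fun j => ¬ Alive r C j t)).card :=
        S.sum_min_le_sum_filter_add_mul_card_filter_not wt (wt i) _
    _ ≤ omega u v wt r C a t + wt i * (c * ((t : ℝ) - r i)) :=
        add_le_add (sum_filter_alive_le_omega u v r C a wt hwt _ t)
          (mul_le_mul_of_nonneg_left (card_filter_not_alive_le u v r C a hcap ht) (hwt i))
    _ = omega u v wt r C a t + c * (wt i * ((t : ℝ) - r i)) := by ring

end

/-- For `c = 0` both quotients are junk zeros, and the bound still holds since `0 ≤ y`. -/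
lemma div_sub_div_le_half {X ω c y : ℝ} (hc : 0 ≤ c) (hy : 0 ≤ y) (h : X ≤ ω + c * y) :
    X / (2 * c) - ω / (2 * c) ≤ y / 2 := by
  rcases hc.eq_or_lt with rfl | hc
  · simp only [mul_zero, div_zero, sub_zero]
    positivity
  · rw [← sub_div, div_le_div_iff₀ (by positivity) two_pos]
    nlinarith

theorem weighted_dual_feasible_general
    [Fintype J] [DecidableEq V]
    (u v : J → V) (d : V → ℕ) (wt : J → ℝ) (r C : J → ℕ) (s : ℝ)
    (hwt : ∀ j, 0 ≤ wt j)
    (hcap : ∀ (a : V) (t : ℕ),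
      ((univ.filter (fun j => C j = t ∧ (u j = a ∨ v j = a))).card : ℝ) ≤ s * d a)
    (i : J) (t : ℕ) (ht : r i ≤ t) :
    alphaDual u v d wt r C s i
        - omega u v wt r C (u i) t / (2 * s * d (u i))
        - omega u v wt r C (v i) t / (2 * s * d (v i))
      ≤ wt i * ((t : ℝ) - (r i : ℝ)) := by
  have hvertex : ∀ a, interferenceWeight u v wt r C a i / (2 * (s * d a))
      - omega u v wt r C a t / (2 * (s * d a)) ≤ wt i * ((t : ℝ) - r i) / 2 := fun a =>
    div_sub_div_le_half ((Nat.cast_nonneg _).trans (hcap a 0))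
      (mul_nonneg (hwt i) (sub_nonneg.mpr (Nat.cast_le.mpr ht)))
      (interferenceWeight_le u v r C a wt hwt (hcap a) ht)
  calc _ = (interferenceWeight u v wt r C (u i) i / (2 * (s * d (u i)))
          - omega u v wt r C (u i) t / (2 * (s * d (u i))))
        + (interferenceWeight u v wt r C (v i) i / (2 * (s * d (v i)))
          - omega u v wt r C (v i) t / (2 * (s * d (v i)))) := by
        rw [alphaDual_eq]; ring
    _ ≤ wt i * ((t : ℝ) - r i) := by linarith [hvertex (u i), hvertex (v i)]

/-- In the weighted unit-size setting, the dual variables `α_i` and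
`β_{a,t} = ω_a(t)/(2s)` form a feasible dual solution: for every job `i` and every time
`t ≥ r_i`, `α_i − β_{u_i,t}/d_{u_i} − β_{v_i,t}/d_{v_i} ≤ w_i (t − r_i)`.  The schedule
has speed `s`: at most `s·d a` jobs incident to any vertex `a` are completed per step. -/
theorem weighted_dual_feasible
    [Fintype J] [DecidableEq V]
    (u v : J → V) (d : V → ℕ) (wt : J → ℝ) (r C : J → ℕ) (s : ℝ)
    (hs : 0 < s) (hd : ∀ a, 0 < d a) (hwt : ∀ j, 0 ≤ wt j)
    (hrC : ∀ j, r j ≤ C j)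
    (hcap : ∀ (a : V) (t : ℕ),
      ((univ.filter (fun j => C j = t ∧ (u j = a ∨ v j = a))).card : ℝ) ≤ s * d a)
    (i : J) (t : ℕ) (ht : r i ≤ t) :
    alphaDual u v d wt r C s i
        - omega u v wt r C (u i) t / (2 * s * d (u i))
        - omega u v wt r C (v i) t / (2 * s * d (v i))
      ≤ wt i * ((t : ℝ) - (r i : ℝ)) :=
  weighted_dual_feasible_general u v d wt r C s hwt hcap i t ht
end

section
/- In the lower bound instance distribution, both instances T_1 and T_2 admit a schedule with total flow time O(L): in T_1, schedule all √L jobs of S_2 in the first √L rounds, then for the next √L rounds schedule one job of S_1 and one of S_3 per round (they are vertex-disjoint), then schedule each remaining S_3 job at its release time; every job in S_1 has flow time ≤ 2√L, every job in S_2 has flow time ≤ √L, and every job in S_3 has flow time 1, giving total flow time at most 3L + 2L = O(L). -/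
/-!
In both instances, the one of `S₁`, `S₂` whose edge meets the online edges is run first, one
job per round in rounds `1, …, √L`; the other runs in rounds `√L + 1, …, 2√L`, alongside the
online jobs, which are vertex-disjoint from it and each run at their release time. So each of
the `2√L` offline jobs has flow time at most `2√L` and each online job flow time `1`, for a
total of at most `4L + L`.
-/

open Finset

/-- Jobs of the lower-bound instances: `√L` copies in `S₁`, `√L` copies in `S₂`, and `L`
jobs released online (`S₃` in `T₁`, `S₄` in `T₂`); here `m = √L`. -/
abbrev JobsLB (m L : ℕ) := (Fin m ⊕ Fin m) ⊕ Fin L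

/-- Release times: `S₁ ∪ S₂` at time `1`, the `k`-th online job at time `√L + k` (`k ∈ [L]`). -/
def relLB (m L : ℕ) : JobsLB m L → ℕ := Sum.elim (fun _ => 1) (fun k => m + 1 + k.val)

/-- First endpoints in `T₁`: `S₁` uses `v₁`, `S₂` uses `v₂`, `S₃` uses `v₃`. -/
def srcT1 (m L : ℕ) : JobsLB m L → Fin 4 :=
  Sum.elim (Sum.elim (fun _ => 0) (fun _ => 1)) (fun _ => 2)

/-- Second endpoints in `T₁`: `S₁` uses `v₂`, `S₂` uses `v₃`, `S₃` uses `v₄`. -/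
def dstT1 (m L : ℕ) : JobsLB m L → Fin 4 :=
  Sum.elim (Sum.elim (fun _ => 1) (fun _ => 2)) (fun _ => 3)

/-- First endpoints in `T₂`: `S₁` uses `v₁`, `S₂` uses `v₂`, `S₄` uses `v₁`. -/
def srcT2 (m L : ℕ) : JobsLB m L → Fin 4 :=
  Sum.elim (Sum.elim (fun _ => 0) (fun _ => 1)) (fun _ => 0)

/-- Second endpoints in `T₂`: `S₁` uses `v₂`, `S₂` uses `v₃`, `S₄` uses `v₄`. -/
def dstT2 (m L : ℕ) : JobsLB m L → Fin 4 :=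
  Sum.elim (Sum.elim (fun _ => 1) (fun _ => 2)) (fun _ => 3)

/-- Degree bound 1 at every vertex: jobs scheduled at the same time are vertex-disjoint. -/
def IsMatchingSched {J : Type*} (u v : J → Fin 4) (C : J → ℕ) : Prop :=
  ∀ j k, j ≠ k → C j = C k → u j ≠ u k ∧ u j ≠ v k ∧ v j ≠ u k ∧ v j ≠ v k

def schedT1 (m L : ℕ) : JobsLB m L → ℕ :=
  Sum.elim (Sum.elim (fun i => m + 1 + i) (fun i => 1 + i)) (fun k => m + 1 + k)

def schedT2 (m L : ℕ) : JobsLB m L → ℕ :=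
  Sum.elim (Sum.elim (fun i => 1 + i) (fun i => m + 1 + i)) (fun k => m + 1 + k)

theorem sum_flow_le_of_inl_le {m L : ℕ} (C : JobsLB m L → ℕ) (b : ℕ)
    (h_offline : ∀ i, C (.inl i) ≤ b) (h_online : ∀ k, C (.inr k) = relLB m L (.inr k)) :
    ∑ j, (C j + 1 - relLB m L j) ≤ 2 * m * b + L := by
  rw [Fintype.sum_sum_type]
  have h_offline_sum : ∑ i, (C (.inl i) + 1 - relLB m L (.inl i)) ≤ 2 * m * b := by
    calc ∑ i, (C (.inl i) + 1 - relLB m L (.inl i)) ≤ (univ : Finset (Fin m ⊕ Fin m)).card • b :=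
          sum_le_card_nsmul _ _ _ fun i _ => by
            have := h_offline i; simp only [relLB, Sum.elim_inl]; omega
      _ = 2 * m * b := by simp [two_mul]
  have h_online_sum : ∑ k, (C (.inr k) + 1 - relLB m L (.inr k)) = L := by
    simp [h_online]
  omega

theorem relLB_le_schedT1 {m L : ℕ} (j : JobsLB m L) : relLB m L j ≤ schedT1 m L j := by
  rcases j with (i | i) | k <;> simp only [relLB, schedT1, Sum.elim_inl, Sum.elim_inr] <;> omega

theorem relLB_le_schedT2 {m L : ℕ} (j : JobsLB m L) : relLB m L j ≤ schedT2 m L j := by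
  rcases j with (i | i) | k <;> simp only [relLB, schedT2, Sum.elim_inl, Sum.elim_inr] <;> omega

theorem schedT1_inl_le {m L : ℕ} (i : Fin m ⊕ Fin m) : schedT1 m L (.inl i) ≤ 2 * m := by
  rcases i with i | i <;> simp only [schedT1, Sum.elim_inl, Sum.elim_inr] <;> omega

theorem schedT2_inl_le {m L : ℕ} (i : Fin m ⊕ Fin m) : schedT2 m L (.inl i) ≤ 2 * m := by
  rcases i with i | i <;> simp only [schedT2, Sum.elim_inl, Sum.elim_inr] <;> omega

theorem isMatchingSched_schedT1 (m L : ℕ) :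
    IsMatchingSched (srcT1 m L) (dstT1 m L) (schedT1 m L) := by
  unfold IsMatchingSched
  rintro ((i | i) | k) ((i' | i') | k') hne hC <;>
    simp only [schedT1, Sum.elim_inl, Sum.elim_inr] at hC
  -- Within a class the start times are distinct, `S₂` is over before time `m + 1`,
  -- and `S₁`, `S₃` are vertex-disjoint.
  all_goals first
    | exact (hne (by simp only [Sum.inl.injEq, Sum.inr.injEq, Fin.ext_iff]; omega)).elim
    | omega
    | simp [srcT1, dstT1]

theorem isMatchingSched_schedT2 (m L : ℕ) :
    IsMatchingSched (srcT2 m L) (dstT2 m L) (schedT2 m L) := by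
  unfold IsMatchingSched
  rintro ((i | i) | k) ((i' | i') | k') hne hC <;>
    simp only [schedT2, Sum.elim_inl, Sum.elim_inr] at hC
  -- Within a class the start times are distinct, `S₁` is over before time `m + 1`,
  -- and `S₂`, `S₄` are vertex-disjoint.
  all_goals first
    | exact (hne (by simp only [Sum.inl.injEq, Sum.inr.injEq, Fin.ext_iff]; omega)).elim
    | omega
    | simp [srcT2, dstT2]

theorem lower_bound_opt_small_general (m L : ℕ) (hL : L = m * m) :
    (∃ C : JobsLB m L → ℕ,
        (∀ j, relLB m L j ≤ C j) ∧ IsMatchingSched (srcT1 m L) (dstT1 m L) C ∧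
        ∑ j, (C j + 1 - relLB m L j) ≤ 5 * L) ∧
    (∃ C : JobsLB m L → ℕ,
        (∀ j, relLB m L j ≤ C j) ∧ IsMatchingSched (srcT2 m L) (dstT2 m L) C ∧
        ∑ j, (C j + 1 - relLB m L j) ≤ 5 * L) := by
  have h_five : 2 * m * (2 * m) + L = 5 * L := by subst hL; ring
  refine ⟨⟨schedT1 m L, relLB_le_schedT1, isMatchingSched_schedT1 m L, ?_⟩,
    ⟨schedT2 m L, relLB_le_schedT2, isMatchingSched_schedT2 m L, ?_⟩⟩
  · exact h_five ▸ sum_flow_le_of_inl_le _ _ schedT1_inl_le fun _ => rfl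
  · exact h_five ▸ sum_flow_le_of_inl_le _ _ schedT2_inl_le fun _ => rfl

/-- Both lower-bound instances `T₁` and `T₂` (with `L = m²`, `m = √L`)
admit feasible schedules (unit jobs, all degree bounds 1, each job scheduled no earlier
than its release) with total flow time `O(L)` — concretely at most `5L`.  A unit job
scheduled at time `C j` has flow time `C j + 1 − r j`. -/
theorem lower_bound_opt_small (m L : ℕ) (hL : L = m * m) (hm : 1 ≤ m) :
    (∃ C : JobsLB m L → ℕ,
        (∀ j, relLB m L j ≤ C j) ∧ IsMatchingSched (srcT1 m L) (dstT1 m L) C ∧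
        ∑ j, (C j + 1 - relLB m L j) ≤ 5 * L) ∧
    (∃ C : JobsLB m L → ℕ,
        (∀ j, relLB m L j ≤ C j) ∧ IsMatchingSched (srcT2 m L) (dstT2 m L) C ∧
        ∑ j, (C j + 1 - relLB m L j) ≤ 5 * L) :=
  lower_bound_opt_small_general m L hL
end

section
/- If at time √L + 1 a deterministic scheduler has at least √L/2 unfinished jobs from S_2, then on instance T_1, for every t with √L + 1 ≤ t ≤ L + √L, there are at least √L/2 released-but-unfinished jobs: at each step at most one job incident to v_3 is processed (all jobs in S_2 ∪ S_3 contain v_3), and one new S_3 job arrives, so the count of alive jobs incident to v_3 never drops below √L/2. -/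
open Finset

/-!
Call a job alive at time `t` if it is released by `t` and not finished before `t`. From `t` to
`t + 1` only the (at most one, by injectivity of completion times) job finishing at `t` can leave
the alive set, while the `S₃` job released at `t + 1` joins it. So the number of alive jobs never
decreases on `[m + 1, L + m]`, and at time `m + 1` it is at least the number of unfinished `S₂` jobs.
-/

namespace Scheduling

variable {ι : Type*} [Fintype ι] (rel C : ι → ℕ)

def alive (t : ℕ) : Finset ι :=
  univ.filter fun j => rel j ≤ t ∧ t ≤ C j

variable {rel C} [DecidableEq ι]

lemma card_alive_sdiff_succ_le_one (hinj : Function.Injective C) (t : ℕ) :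
    #(alive rel C t \ alive rel C (t + 1)) ≤ 1 := by
  have hfinish : ∀ j ∈ alive rel C t \ alive rel C (t + 1), C j = t := by
    intro j hj
    simp only [alive, mem_sdiff, mem_filter, mem_univ, true_and] at hj
    omega
  exact card_le_one.mpr fun a ha b hb => hinj ((hfinish a ha).trans (hfinish b hb).symm)

lemma card_alive_le_succ (hC : ∀ j, rel j ≤ C j) (hinj : Function.Injective C) {t : ℕ}
    {j₀ : ι} (hj₀ : rel j₀ = t + 1) :
    #(alive rel C t) ≤ #(alive rel C (t + 1)) := by
  have hnew : j₀ ∈ alive rel C (t + 1) \ alive rel C t := by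
    simp only [alive, mem_sdiff, mem_filter, mem_univ, true_and]
    exact ⟨⟨hj₀.le, hj₀ ▸ hC j₀⟩, by omega⟩
  calc #(alive rel C t)
      = #(alive rel C t \ alive rel C (t + 1)) + #(alive rel C t ∩ alive rel C (t + 1)) :=
        (card_sdiff_add_card_inter _ _).symm
    _ ≤ #(alive rel C (t + 1) \ alive rel C t) + #(alive rel C (t + 1) ∩ alive rel C t) := by
        rw [inter_comm]
        have := card_pos.mpr ⟨j₀, hnew⟩
        have := card_alive_sdiff_succ_le_one (rel := rel) hinj t
        omega
    _ = #(alive rel C (t + 1)) := card_sdiff_add_card_inter _ _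

lemma card_alive_mono_of_releases (hC : ∀ j, rel j ≤ C j) (hinj : Function.Injective C)
    {s t : ℕ} (hst : s ≤ t) (hrel : ∀ u, s ≤ u → u < t → ∃ j, rel j = u + 1) :
    #(alive rel C s) ≤ #(alive rel C t) := by
  induction t, hst using Nat.le_induction with
  | base => exact le_rfl
  | succ t hst ih =>
    obtain ⟨j₀, hj₀⟩ := hrel t hst (Nat.lt_succ_self t)
    exact (ih fun u hsu hut => hrel u hsu (by omega)).trans (card_alive_le_succ hC hinj hj₀)

end Scheduling

open Scheduling in
/-- On instance `T₁`, all jobs of `S₂ ∪ S₃` contain vertex `v₃`, so the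
matching constraint (degree bound 1) lets the scheduler complete at most one of them per
time step, i.e. completion times are injective.  `S₂` is `√L = m` unit jobs released at
time 1; `S₃` releases one unit job at each time `m + k` for `k ∈ [L]` (encoded as
`m + 1 + k` for `k < L`).  If at time `m + 1` at least `m/2` jobs of `S₂` are unfinished
(`C j ≥ m + 1`), then at every time `t` with `m + 1 ≤ t ≤ L + m` there are at least
`m/2` released-but-unfinished jobs (`rel j ≤ t ≤ C j`). -/
theorem backlog_persists (m L : ℕ)
    (C : (Fin m ⊕ Fin L) → ℕ)
    (rel : (Fin m ⊕ Fin L) → ℕ)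
    (hrel : rel = Sum.elim (fun _ => 1) (fun k => m + 1 + k.val))
    (hC : ∀ j, rel j ≤ C j)
    (hinj : Function.Injective C)
    (hstart : m ≤ 2 * (univ.filter (fun j : Fin m => m + 1 ≤ C (Sum.inl j))).card) :
    ∀ t : ℕ, m + 1 ≤ t → t ≤ L + m →
      m ≤ 2 * (univ.filter (fun j : Fin m ⊕ Fin L => rel j ≤ t ∧ t ≤ C j)).card := by
  intro t hmt htL
  have hbase : (univ.filter fun j : Fin m => m + 1 ≤ C (Sum.inl j)).map Function.Embedding.inl ⊆
      alive rel C (m + 1) := by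
    intro j hj
    obtain ⟨i, hi, rfl⟩ := mem_map.mp hj
    simp only [alive, mem_filter, mem_univ, true_and] at hi ⊢
    exact ⟨by simp [hrel], hi⟩
  have hreleases : ∀ u, m + 1 ≤ u → u < t → ∃ j, rel j = u + 1 :=
    fun u hmu hut => ⟨Sum.inr ⟨u - m, by omega⟩, by simp only [hrel, Sum.elim_inr]; omega⟩
  have := (card_map _).symm.trans_le (card_le_card hbase)
  have := card_alive_mono_of_releases hC hinj hmt hreleases
  change m ≤ 2 * #(alive rel C t)
  omega
end
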